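/- arXiv:1705.09061 — 2 statements merged into one kernel-verified Lean document; each statement's English description precedes it below -/
import Mathlib

section
/- Let G = (V, E) be a simple graph on n ≥ 2 vertices, let ε ∈ [0,1], and let X be a random subset of V obtained by including each vertex independently with probability 1/(9n^ε). Then with probability at least 1 − 1/n, every pair of vertices {j,l} ∈ Δ(X) satisfies m({j,l}) < 27 n^ε ln n. -/
/-!
For `p = 1/(9 n^ε)`, a pair `{j,l}` lies in `Δ(X)` exactly when `X` misses all `m({j,l})`
common neighbours of `j` and `l`, which happens with probability
`(1 - p)^m ≤ exp (-p m)`. If `m ≥ 27 n^ε ln n` this is at most `n⁻³`, and a union bound over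
fewer than `n²` pairs leaves a failure probability of at most `1/n`.
-/

open MeasureTheory

/-- `m({j,l})`: the number of common neighbors of `j` and `l` in `G`. -/
def commonNbrs {V : Type*} [Fintype V] (G : SimpleGraph V) [DecidableRel G.Adj]
    (j l : V) : ℕ :=
  (Finset.univ.filter fun k => G.Adj j k ∧ G.Adj l k).card

/-- `{u,v} ∈ Δ(X)`: no vertex of `X` is adjacent to both `u` and `v`. -/
def inDelta {V : Type*} (G : SimpleGraph V) (X : Finset V) (u v : V) : Prop :=
  ∀ x ∈ X, ¬ (G.Adj x u ∧ G.Adj x v)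

open Finset

lemma measurableSet_preimage_of_measurableSet_fiber {Ω α : Type*} [MeasurableSpace Ω]
    [Countable α] {Y : Ω → α} (hY : ∀ a, MeasurableSet {ω | Y ω = a}) (s : Set α) :
    MeasurableSet (Y ⁻¹' s) := by
  rw [← Set.biUnion_preimage_singleton]
  exact .biUnion s.to_countable fun a _ => hY a

def IsBernoulliRandomSubset {Ω V : Type*} [MeasurableSpace Ω] [Fintype V] (μ : Measure Ω)
    (X : Ω → Finset V) (p : ℝ) : Prop :=
  ∀ F, μ.real {ω | X ω = F} = p ^ #F * (1 - p) ^ (Fintype.card V - #F)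

section RandomFinset

variable {Ω V : Type*} [MeasurableSpace Ω] {μ : Measure Ω} [Fintype V] {X : Ω → Finset V}
  {p : ℝ}

lemma measureReal_disjoint_eq_pow [IsFiniteMeasure μ]
    (hmeas : ∀ F, MeasurableSet {ω | X ω = F})
    (hdist : IsBernoulliRandomSubset μ X p)
    (S : Finset V) : μ.real {ω | Disjoint (X ω) S} = (1 - p) ^ #S := by
  classical
  have hset : {ω | Disjoint (X ω) S} = X ⁻¹' ↑Sᶜ.powerset := by
    ext ω
    simp [-coe_compl, subset_compl_iff_disjoint_right]
  rw [hset, ← sum_measureReal_preimage_singleton _ fun F _ => hmeas F]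
  calc ∑ F ∈ Sᶜ.powerset, μ.real (X ⁻¹' {F})
      = ∑ F ∈ Sᶜ.powerset, p ^ #F * (1 - p) ^ (#Sᶜ - #F) * (1 - p) ^ #S := by
        refine sum_congr rfl fun F hF => ?_
        have hF : #F ≤ #Sᶜ := card_le_card (mem_powerset.1 hF)
        have hcard : #Sᶜ + #S = Fintype.card V := card_compl_add_card S
        rw [mul_assoc, ← pow_add, ← Nat.sub_add_comm hF, hcard]
        exact hdist F
    _ = (1 - p) ^ #S := by
        rw [← sum_mul, sum_pow_mul_eq_add_pow, add_sub_cancel, one_pow, one_mul]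

lemma measureReal_exists_disjoint_le [IsFiniteMeasure μ]
    (hmeas : ∀ F, MeasurableSet {ω | X ω = F})
    (hdist : IsBernoulliRandomSubset μ X p)
    {ι : Type*} (I : Finset ι) (S : ι → Finset V) :
    μ.real {ω | ∃ i ∈ I, Disjoint (X ω) (S i)} ≤ ∑ i ∈ I, (1 - p) ^ #(S i) := by
  have hset :
      {ω | ∃ i ∈ I, Disjoint (X ω) (S i)} = ⋃ i ∈ I, {ω | Disjoint (X ω) (S i)} := by
    ext ω
    simp
  rw [hset]
  exact (measureReal_biUnion_finset_le _ _).trans_eq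
    (sum_congr rfl fun i _ => measureReal_disjoint_eq_pow hmeas hdist (S i))

lemma one_sub_card_mul_le_measureReal_forall_not_disjoint [IsProbabilityMeasure μ]
    (hmeas : ∀ F, MeasurableSet {ω | X ω = F})
    (hdist : IsBernoulliRandomSubset μ X p)
    {ι : Type*} (I : Finset ι) (S : ι → Finset V) {δ : ℝ}
    (hS : ∀ i ∈ I, (1 - p) ^ #(S i) ≤ δ) :
    1 - #I * δ ≤ μ.real {ω | ∀ i ∈ I, ¬Disjoint (X ω) (S i)} := by
  have hcompl : {ω | ∀ i ∈ I, ¬Disjoint (X ω) (S i)} =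
      {ω | ∃ i ∈ I, Disjoint (X ω) (S i)}ᶜ := by
    ext ω
    simp
  have hmeasE : MeasurableSet {ω | ∃ i ∈ I, Disjoint (X ω) (S i)} :=
    measurableSet_preimage_of_measurableSet_fiber hmeas {F | ∃ i ∈ I, Disjoint F (S i)}
  rw [hcompl, probReal_compl_eq_one_sub hmeasE]
  have hunion : μ.real {ω | ∃ i ∈ I, Disjoint (X ω) (S i)} ≤ #I * δ := by
    rw [← nsmul_eq_mul]
    exact (measureReal_exists_disjoint_le hmeas hdist I S).trans (sum_le_card_nsmul _ _ _ hS)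
  linarith

end RandomFinset

lemma one_sub_pow_le_inv_pow {p x : ℝ} {k m : ℕ} (hp : p ≤ 1) (hx : 0 < x)
    (h : k * Real.log x ≤ p * m) : (1 - p) ^ m ≤ (x ^ k)⁻¹ :=
  calc (1 - p) ^ m ≤ Real.exp (-p) ^ m :=
        pow_le_pow_left₀ (by linarith) (Real.one_sub_le_exp_neg p) m
    _ = Real.exp (-(p * m)) := by rw [← Real.exp_nat_mul]; ring_nf
    _ ≤ Real.exp (-(k * Real.log x)) := Real.exp_le_exp.2 (neg_le_neg h)
    _ = (x ^ k)⁻¹ := by rw [Real.exp_neg, Real.exp_nat_mul, Real.exp_log hx]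

section CommonNeighbors

variable {V : Type*} [Fintype V] (G : SimpleGraph V) [DecidableRel G.Adj]

def commonNbrFinset (j l : V) : Finset V :=
  univ.filter fun k => G.Adj j k ∧ G.Adj l k

lemma inDelta_iff_disjoint (F : Finset V) (j l : V) :
    inDelta G F j l ↔ Disjoint F (commonNbrFinset G j l) := by
  simp only [inDelta, commonNbrFinset, disjoint_right, mem_filter, mem_univ, true_and,
    G.adj_comm]
  exact ⟨fun h k hk hkF => h k hkF hk, fun h x hxF hx => h hx hxF⟩

end CommonNeighbors

theorem pairs_in_Delta_have_few_common_neighbors_general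
    {Ω : Type*} [MeasurableSpace Ω] (μ : Measure Ω) [IsProbabilityMeasure μ]
    {V : Type*} [Fintype V]
    (G : SimpleGraph V) [DecidableRel G.Adj]
    (n : ℕ) (hn : n = Fintype.card V) (hn2 : 2 ≤ n)
    (ε : ℝ) (hε0 : 0 ≤ ε)
    (X : Ω → Finset V)
    (hmeas : ∀ F : Finset V, MeasurableSet {ω | X ω = F})
    (hdist : ∀ F : Finset V, (μ {ω | X ω = F}).toReal =
      (1 / (9 * (n : ℝ) ^ ε)) ^ F.card *
        (1 - 1 / (9 * (n : ℝ) ^ ε)) ^ (n - F.card)) :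
    1 - 1 / (n : ℝ) ≤
      (μ {ω | ∀ j l : V, j ≠ l → inDelta G (X ω) j l →
        (commonNbrs G j l : ℝ) < 27 * (n : ℝ) ^ ε * Real.log n}).toReal := by
  classical
  subst hn
  set n := Fintype.card V
  set p : ℝ := 1 / (9 * (n : ℝ) ^ ε) with hp
  set T : ℝ := 27 * (n : ℝ) ^ ε * Real.log n
  have hn0 : (0 : ℝ) < n := by positivity
  have hnε : 1 ≤ (n : ℝ) ^ ε :=
    Real.one_le_rpow (by exact_mod_cast hn2.trans' one_le_two) hε0
  have hp1 : p ≤ 1 := by rw [hp, div_le_one (by positivity)]; linarith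
  set bad := univ.filter fun jl : V × V => jl.1 ≠ jl.2 ∧ T ≤ commonNbrs G jl.1 jl.2
  have hevent :
      {ω | ∀ j l : V, j ≠ l → inDelta G (X ω) j l → (commonNbrs G j l : ℝ) < T} =
      {ω | ∀ jl ∈ bad, ¬Disjoint (X ω) (commonNbrFinset G jl.1 jl.2)} := by
    ext ω
    simp only [Set.mem_ofPred_eq, inDelta_iff_disjoint, bad, mem_filter, mem_univ, true_and,
      Prod.forall]
    grind
  have hterm :
      ∀ jl ∈ bad, (1 - p) ^ #(commonNbrFinset G jl.1 jl.2) ≤ ((n : ℝ) ^ 3)⁻¹ := by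
    intro jl hjl
    refine one_sub_pow_le_inv_pow hp1 hn0 ?_
    calc (3 : ℕ) * Real.log n = p * T := by rw [hp]; field_simp; ring
      _ ≤ p * #(commonNbrFinset G jl.1 jl.2) := by gcongr; exact (mem_filter.1 hjl).2.2
  have hbad : (#bad : ℝ) ≤ n ^ 2 := by
    have : #bad ≤ n ^ 2 := (card_le_univ bad).trans_eq (by rw [Fintype.card_prod, sq])
    exact_mod_cast this
  rw [hevent, ← measureReal_def]
  calc 1 - 1 / (n : ℝ) = 1 - n ^ 2 * ((n : ℝ) ^ 3)⁻¹ := by field_simp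
    _ ≤ 1 - #bad * ((n : ℝ) ^ 3)⁻¹ := by gcongr
    _ ≤ _ := one_sub_card_mul_le_measureReal_forall_not_disjoint hmeas hdist bad _ hterm

/-- **Statement (2) in the proof of Lemma 3 of the paper.**
Let `G = (V,E)` be a simple graph on `n ≥ 2` vertices, `ε ∈ [0,1]`, and let `X` be a
random subset of `V` obtained by including each vertex independently with probability
`1/(9 n^ε)`.  Then with probability at least `1 - 1/n`, every pair of (distinct)
vertices `{j,l} ∈ Δ(X)` satisfies `m({j,l}) < 27 n^ε ln n`. -/
theorem pairs_in_Delta_have_few_common_neighbors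
    {Ω : Type*} [MeasurableSpace Ω] (μ : Measure Ω) [IsProbabilityMeasure μ]
    {V : Type*} [Fintype V] [DecidableEq V]
    (G : SimpleGraph V) [DecidableRel G.Adj]
    (n : ℕ) (hn : n = Fintype.card V) (hn2 : 2 ≤ n)
    (ε : ℝ) (hε0 : 0 ≤ ε) (hε1 : ε ≤ 1)
    (X : Ω → Finset V)
    (hmeas : ∀ F : Finset V, MeasurableSet {ω | X ω = F})
    (hdist : ∀ F : Finset V, (μ {ω | X ω = F}).toReal =
      (1 / (9 * (n : ℝ) ^ ε)) ^ F.card *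
        (1 - 1 / (9 * (n : ℝ) ^ ε)) ^ (n - F.card)) :
    1 - 1 / (n : ℝ) ≤
      (μ {ω | ∀ j l : V, j ≠ l → inDelta G (X ω) j l →
        (commonNbrs G j l : ℝ) < 27 * (n : ℝ) ^ ε * Real.log n}).toReal :=
  pairs_in_Delta_have_few_common_neighbors_general μ G n hn hn2 ε hε0 X hmeas hdist
end

section
/- Let V = {0,…,n−1} with n ≥ 3, let E be the tuple of independent uniform {0,1}-valued edge indicators of the random graph G = G(n,1/2), fix a vertex i, and let M' = (n−1)(n−2)/2. Let T_i be a random variable taking values in finite sets of 3-element subsets of V such that almost surely every element of T_i is a triangle of G, and such that with probability at least 1 − 1/32 the set T_i contains every triangle of G that contains the vertex i. Then the mutual information between E and T_i, measured in bits, satisfies I(E; T_i) ≥ (M'/16)·(1/15 − 1/32); in particular I(E; T_i) = Ω(n²). -/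
open MeasureTheory

/-- The set `𝓔` of unordered pairs of distinct elements of `V = {0,…,n-1}`
(the potential edges of a graph on `V`). -/
abbrev EdgeIdx (n : ℕ) := {e : Sym2 (Fin n) // ¬ e.IsDiag}

/-- Adjacency in the graph on `V = {0,…,n-1}` whose edge set is encoded by the
indicator function `g : 𝓔 → {0,1}`. -/
def gAdj {n : ℕ} (g : EdgeIdx n → Bool) (u v : Fin n) : Prop :=
  ∃ e : EdgeIdx n, e.val = s(u, v) ∧ g e = true

instance {n : ℕ} (g : EdgeIdx n → Bool) (u v : Fin n) : Decidable (gAdj g u v) := by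
  unfold gAdj; infer_instance

/-- `s` is a triangle of the graph encoded by the edge indicators `g`. -/
def isTriangle {n : ℕ} (g : EdgeIdx n → Bool) (s : Finset (Fin n)) : Prop :=
  s.card = 3 ∧ ∀ u ∈ s, ∀ v ∈ s, u ≠ v → gAdj g u v

instance {n : ℕ} (g : EdgeIdx n → Bool) (s : Finset (Fin n)) :
    Decidable (isTriangle g s) := by unfold isTriangle; infer_instance

/-- `P(R)`: the set of pairs `f ∈ 𝓔` contained in at least one member of `R`. -/
def coveredPairs {n : ℕ} (R : Finset (Finset (Fin n))) : Finset (EdgeIdx n) :=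
  Finset.univ.filter fun e => ∃ s ∈ R, e.val ∈ s.sym2

/-- The Shannon mutual information `I(A; B)`, measured in bits, of two finitely-valued
random variables `A` and `B` on a probability space `(Ω, μ)`. -/
noncomputable def mutualInfo {Ω α β : Type*} [MeasurableSpace Ω] (μ : Measure Ω)
    [Fintype α] [Fintype β] (A : Ω → α) (B : Ω → β) : ℝ :=
  ∑ a : α, ∑ b : β,
    (μ {ω | A ω = a ∧ B ω = b}).toReal *
      Real.logb 2 ((μ {ω | A ω = a ∧ B ω = b}).toReal /
        ((μ {ω | A ω = a}).toReal * (μ {ω | B ω = b}).toReal))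

/-!
Conditionally on `T_i = R`, the graph `E` almost surely contains every triangle of `R`, so it is
supported on the at most `2 ^ (M - |P(R)|)` graphs in which all pairs of `P(R)` are edges; since
`E` is uniform on `2 ^ M` graphs, the log-sum inequality shows that `R` contributes at least
`P(T_i = R) · |P(R)|` bits to `I(E; T_i)`. Hence `I(E; T_i) ≥ 𝔼 |P(T_i)| = ∑_f P(f ∈ P(T_i))`.
A pair `f = {u, v}` avoiding `i` is covered as soon as the triangle `{i, u, v}` is present
(probability `1/8`) and `T_i` lists every triangle at `i` (probability `≥ 31/32`), so
`P(f ∈ P(T_i)) ≥ 3/32` for each of the `M'` such pairs.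
-/

open Finset Real

section FiniteValued

variable {Ω α β : Type*} [MeasurableSpace Ω] {μ : Measure Ω}

lemma measurableSet_setOf_of_measurableSet_fiber [Countable α] {X : Ω → α}
    (hX : ∀ a, MeasurableSet {ω | X ω = a}) (Q : α → Prop) : MeasurableSet {ω | Q (X ω)} := by
  have : {ω | Q (X ω)} = ⋃ a ∈ {a | Q a}, {ω | X ω = a} := by ext; simp
  rw [this]
  exact .biUnion (Set.to_countable _) fun a _ => hX a

lemma measurableSet_fiber_prod {X : Ω → α} {Y : Ω → β} (hX : ∀ a, MeasurableSet {ω | X ω = a})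
    (hY : ∀ b, MeasurableSet {ω | Y ω = b}) (p : α × β) :
    MeasurableSet {ω | (X ω, Y ω) = p} := by
  simp only [Prod.ext_iff]
  exact (hX p.1).inter (hY p.2)

variable [IsFiniteMeasure μ]

lemma measureReal_setOf_eq_sum [Fintype α] {X : Ω → α} (hX : ∀ a, MeasurableSet {ω | X ω = a})
    (Q : α → Prop) [DecidablePred Q] :
    μ.real {ω | Q (X ω)} = ∑ a with Q a, μ.real {ω | X ω = a} := by
  have hQ : {ω | Q (X ω)} = X ⁻¹' ↑({a | Q a} : Finset α) := by ext; simp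
  rw [hQ, measureReal_def, ← sum_measure_preimage_singleton _ fun a _ => hX a,
    ENNReal.toReal_sum fun _ _ => measure_ne_top _ _]
  rfl

lemma sum_measureReal_fiber_inter [Fintype α] {X : Ω → α}
    (hX : ∀ a, MeasurableSet {ω | X ω = a}) (s : Set Ω) :
    ∑ a, μ.real ({ω | X ω = a} ∩ s) = μ.real s := by
  have h := sum_measure_preimage_singleton (μ := μ.restrict s) univ fun a _ => hX a
  rw [coe_univ, Set.preimage_univ, Measure.restrict_apply_univ] at h
  rw [measureReal_def, ← h, ENNReal.toReal_sum fun _ _ => measure_ne_top _ _]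
  refine sum_congr rfl fun a _ => ?_
  rw [Measure.restrict_apply (show MeasurableSet (X ⁻¹' {a}) from hX a)]
  rfl

lemma sum_measureReal_mem_eq_sum_mul_card [Fintype α] [Fintype β] [DecidableEq β] {X : Ω → α}
    (hX : ∀ a, MeasurableSet {ω | X ω = a}) (F : α → Finset β) :
    ∑ b, μ.real {ω | b ∈ F (X ω)} = ∑ a, μ.real {ω | X ω = a} * #(F a) := by
  simp only [fun b => measureReal_setOf_eq_sum (μ := μ) hX (fun a => b ∈ F a), sum_filter]
  rw [sum_comm]
  refine sum_congr rfl fun a _ => ?_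
  rw [← sum_filter, filter_mem_eq_inter, univ_inter, sum_const, nsmul_eq_mul, mul_comm]

lemma add_sub_one_le_measureReal_inter [IsProbabilityMeasure μ] (s : Set Ω) {t : Set Ω}
    (ht : MeasurableSet t) : μ.real s + μ.real t - 1 ≤ μ.real (s ∩ t) := by
  have := measureReal_union_add_inter (μ := μ) (s := s) ht
  have : μ.real (s ∪ t) ≤ 1 := measureReal_le_one
  linarith

end FiniteValued

lemma mul_log_div_le_sum_mul_log_div {ι : Type*} (s : Finset ι) {a b : ι → ℝ}
    (ha : ∀ i ∈ s, 0 ≤ a i) (hb : ∀ i ∈ s, 0 < b i) :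
    (∑ i ∈ s, a i) * log ((∑ i ∈ s, a i) / ∑ i ∈ s, b i) ≤ ∑ i ∈ s, a i * log (a i / b i) := by
  rcases s.eq_empty_or_nonempty with rfl | hs
  · simp
  set B := ∑ i ∈ s, b i
  have hB : 0 < B := sum_pos hb hs
  -- Jensen for `x ↦ x log x` with weights `b i / B` at the points `a i / b i`
  have hJensen := convexOn_mul_log.map_sum_le (t := s) (w := fun i => b i / B)
    (p := fun i => a i / b i) (fun i hi => (div_pos (hb i hi) hB).le)
    (by rw [← sum_div, div_self hB.ne'])
    (fun i hi => Set.mem_Ici.2 (div_nonneg (ha i hi) (hb i hi).le))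
  simp only [smul_eq_mul] at hJensen
  have hmean : ∑ i ∈ s, b i / B * (a i / b i) = (∑ i ∈ s, a i) / B := by
    rw [sum_div]
    exact sum_congr rfl fun i hi => by field_simp [(hb i hi).ne']
  rw [hmean] at hJensen
  calc (∑ i ∈ s, a i) * log ((∑ i ∈ s, a i) / B)
      = B * ((∑ i ∈ s, a i) / B * log ((∑ i ∈ s, a i) / B)) := by field_simp
    _ ≤ B * ∑ i ∈ s, b i / B * (a i / b i * log (a i / b i)) := by gcongr
    _ = ∑ i ∈ s, a i * log (a i / b i) := by
      rw [mul_sum]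
      exact sum_congr rfl fun i hi => by field_simp [(hb i hi).ne']

lemma mul_le_sum_mul_logb_div {ι : Type*} [Fintype ι] {p : ι → ℝ} {S : Finset ι} {W c : ℝ}
    {k : ℕ} (hp : ∀ i, 0 ≤ p i) (hS : ∀ i ∉ S, p i = 0) (hW : ∑ i, p i = W) (hc : 0 < c)
    (hcard : #S * c ≤ (1 / 2) ^ k) :
    W * k ≤ ∑ i, p i * logb 2 (p i / (c * W)) := by
  have hWS : ∑ i ∈ S, p i = W := by
    rw [← hW]
    exact sum_subset (subset_univ S) fun i _ hi => hS i hi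
  rw [← sum_subset (subset_univ S) fun i _ hi => by rw [hS i hi, zero_mul]]
  rcases (hW ▸ sum_nonneg fun i _ => hp i : 0 ≤ W).eq_or_lt with rfl | hWpos
  · simp
  have hSpos : (0 : ℝ) < #S := by
    rcases S.eq_empty_or_nonempty with rfl | hS
    · simp at hWS; linarith
    · exact_mod_cast hS.card_pos
  have hlogsum := mul_log_div_le_sum_mul_log_div S (b := fun _ => c * W) (fun i _ => hp i)
    fun _ _ => mul_pos hc hWpos
  rw [hWS, sum_const, nsmul_eq_mul] at hlogsum
  have hk : k * log 2 ≤ log (W / (#S * (c * W))) := by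
    rw [← log_pow, show W / (#S * (c * W)) = (#S * c)⁻¹ by field_simp]
    apply log_le_log (by positivity)
    rw [show (2 : ℝ) ^ k = ((1 / 2) ^ k)⁻¹ by simp]
    exact inv_anti₀ (by positivity) hcard
  simp only [logb, ← mul_div_assoc, ← sum_div]
  rw [le_div_iff₀ (log_pos one_lt_two)]
  nlinarith

lemma card_filter_forall_mem_eq_true {α : Type*} [Fintype α] [DecidableEq α] (P : Finset α) :
    #{g : α → Bool | ∀ a ∈ P, g a = true} = 2 ^ (Fintype.card α - #P) := by
  have : ({g : α → Bool | ∀ a ∈ P, g a = true} : Finset _) =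
      Fintype.piFinset fun a => if a ∈ P then {true} else univ := by
    ext g
    simp only [mem_filter, mem_univ, true_and, Fintype.mem_piFinset]
    refine forall_congr' fun a => ?_
    split_ifs <;> simp [*]
  rw [this, Fintype.card_piFinset]
  simp only [apply_ite card, card_singleton, card_univ, Fintype.card_bool]
  rw [prod_ite, prod_const_one, one_mul, prod_const, filter_not, filter_mem_eq_inter, univ_inter,
    card_univ_sdiff]

lemma card_filter_forall_mem_eq_true_mul {α : Type*} [Fintype α] [DecidableEq α]
    (P : Finset α) :
    (#{g : α → Bool | ∀ a ∈ P, g a = true} : ℝ) * (1 / 2) ^ Fintype.card α = (1 / 2) ^ #P := by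
  rw [card_filter_forall_mem_eq_true, ← Nat.sub_add_cancel (card_le_univ P), Nat.add_sub_cancel,
    pow_add, Nat.cast_pow, Nat.cast_ofNat, ← mul_assoc, ← mul_pow]
  norm_num

section UniformBits

variable {Ω α β : Type*} [MeasurableSpace Ω] {μ : Measure Ω} [IsFiniteMeasure μ]
  [Fintype α] [DecidableEq α] {E : Ω → α → Bool}

lemma measureReal_forall_mem_eq_true (hE : ∀ g, MeasurableSet {ω | E ω = g})
    (hunif : ∀ g, μ.real {ω | E ω = g} = (1 / 2) ^ Fintype.card α) (P : Finset α) :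
    μ.real {ω | ∀ a ∈ P, E ω a = true} = (1 / 2) ^ #P := by
  rw [measureReal_setOf_eq_sum hE fun g => ∀ a ∈ P, g a = true]
  simp only [hunif, sum_const, nsmul_eq_mul]
  exact card_filter_forall_mem_eq_true_mul P

lemma sum_measureReal_mul_card_le_mutualInfo [Fintype β] (hE : ∀ g, MeasurableSet {ω | E ω = g})
    (hunif : ∀ g, μ.real {ω | E ω = g} = (1 / 2) ^ Fintype.card α) {T : Ω → β}
    (F : β → Finset α) (hF : ∀ᵐ ω ∂μ, ∀ a ∈ F (T ω), E ω a = true) :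
    ∑ b, μ.real {ω | T ω = b} * #(F b) ≤ mutualInfo μ E T := by
  rw [mutualInfo, sum_comm]
  refine sum_le_sum fun b _ => ?_
  simp only [← measureReal_def, hunif]
  have hfib : ∑ g, μ.real {ω | E ω = g ∧ T ω = b} = μ.real {ω | T ω = b} :=
    sum_measureReal_fiber_inter hE _
  have hsupp : ∀ g ∉ ({g | ∀ a ∈ F b, g a = true} : Finset (α → Bool)),
      μ.real {ω | E ω = g ∧ T ω = b} = 0 := by
    intro g hg
    refine measureReal_mono_null (s₂ := {ω | ¬ ∀ a ∈ F (T ω), E ω a = true}) ?_ ?_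
    · rintro ω ⟨rfl, rfl⟩
      simpa using hg
    · rw [measureReal_eq_zero_iff]
      exact ae_iff.1 hF
  exact mul_le_sum_mul_logb_div (fun g => measureReal_nonneg) hsupp hfib (by positivity)
    (card_filter_forall_mem_eq_true_mul _).le

end UniformBits

section Combinatorics

variable {n : ℕ}

lemma coveredPairs_singleton (s : Finset (Fin n)) :
    coveredPairs {s} = s.sym2.subtype (¬ ·.IsDiag) := by
  ext e
  simp [coveredPairs]

lemma card_coveredPairs_singleton (s : Finset (Fin n)) :
    #(coveredPairs {s}) = (#s).choose 2 := by
  rw [coveredPairs_singleton, card_subtype, sym2_eq_image, Sym2.filter_image_mk_not_isDiag,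
    Sym2.card_image_offDiag]

lemma card_filter_notMem_eq_choose (i : Fin n) :
    #{f : EdgeIdx n | i ∉ f.val} = (n - 1).choose 2 := by
  have : ({f : EdgeIdx n | i ∉ f.val} : Finset _) = coveredPairs {univ.erase i} := by
    ext f
    simp only [coveredPairs, mem_sym2_iff, mem_filter, mem_univ, true_and, mem_singleton,
      exists_eq_left, mem_erase, ne_eq, and_true]
    exact ⟨fun h a ha hai => h (hai ▸ ha), fun h hi => h i hi rfl⟩
  rw [this, card_coveredPairs_singleton, card_erase_of_mem (mem_univ i), card_univ,
    Fintype.card_fin]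

lemma forall_mem_coveredPairs_of_isTriangle {g : EdgeIdx n → Bool}
    {R : Finset (Finset (Fin n))} (hR : ∀ s ∈ R, isTriangle g s) :
    ∀ e ∈ coveredPairs R, g e = true := by
  rintro ⟨e, he⟩ hmem
  induction e using Sym2.ind with
  | _ u v =>
  obtain ⟨s, hsR, huv⟩ : ∃ s ∈ R, s(u, v) ∈ s.sym2 := by simpa [coveredPairs] using hmem
  rw [mk_mem_sym2_iff] at huv
  obtain ⟨e', he', hge'⟩ := (hR s hsR).2 u huv.1 v huv.2 (by simpa using he)
  obtain rfl : e' = ⟨s(u, v), he⟩ := Subtype.ext he'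
  exact hge'

lemma isTriangle_iff_forall_mem_coveredPairs {g : EdgeIdx n → Bool} {s : Finset (Fin n)}
    (hs : #s = 3) : isTriangle g s ↔ ∀ e ∈ coveredPairs {s}, g e = true := by
  refine ⟨fun h => forall_mem_coveredPairs_of_isTriangle (by simpa using h), fun h => ?_⟩
  refine ⟨hs, fun u hu v hv huv => ⟨⟨s(u, v), by simpa using huv⟩, rfl, h _ ?_⟩⟩
  simp [coveredPairs, hu, hv]

end Combinatorics

section LocalListing

variable {Ω : Type*} [MeasurableSpace Ω] {μ : Measure Ω} {n : ℕ}
  {E : Ω → EdgeIdx n → Bool}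

lemma measureReal_isTriangle [IsFiniteMeasure μ] (hE : ∀ g, MeasurableSet {ω | E ω = g})
    (hunif : ∀ g, μ.real {ω | E ω = g} = (1 / 2) ^ Fintype.card (EdgeIdx n))
    {s : Finset (Fin n)} (hs : #s = 3) :
    μ.real {ω | isTriangle (E ω) s} = 1 / 8 := by
  simp only [isTriangle_iff_forall_mem_coveredPairs hs]
  rw [measureReal_forall_mem_eq_true hE hunif, card_coveredPairs_singleton, hs]
  norm_num

lemma three_div_thirtyTwo_le_measureReal_mem_coveredPairs [IsProbabilityMeasure μ]
    (hE : ∀ g, MeasurableSet {ω | E ω = g})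
    (hunif : ∀ g, μ.real {ω | E ω = g} = (1 / 2) ^ Fintype.card (EdgeIdx n))
    {T : Ω → Finset (Finset (Fin n))} (hT : ∀ R, MeasurableSet {ω | T ω = R}) {i : Fin n}
    (hloc : 1 - 1 / 32 ≤ μ.real {ω | ∀ s, isTriangle (E ω) s → i ∈ s → s ∈ T ω})
    {f : EdgeIdx n} (hf : i ∉ f.val) :
    3 / 32 ≤ μ.real {ω | f ∈ coveredPairs (T ω)} := by
  obtain ⟨e, he⟩ := f
  induction e using Sym2.ind with
  | _ u v =>
  simp only [Sym2.mem_iff, not_or] at hf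
  have hs : #{i, u, v} = 3 := card_eq_three.2 ⟨i, u, v, hf.1, hf.2, by simpa using he, rfl⟩
  have hsub : {ω | isTriangle (E ω) {i, u, v}} ∩
      {ω | ∀ s, isTriangle (E ω) s → i ∈ s → s ∈ T ω} ⊆
      {ω | ⟨s(u, v), he⟩ ∈ coveredPairs (T ω)} := by
    rintro ω ⟨htri, hlist⟩
    simp only [coveredPairs, Set.mem_ofPred_eq, mem_filter, mem_univ, true_and]
    exact ⟨_, hlist _ htri (by simp), by simp⟩
  have hlocmeas : MeasurableSet {ω | ∀ s, isTriangle (E ω) s → i ∈ s → s ∈ T ω} :=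
    measurableSet_setOf_of_measurableSet_fiber (measurableSet_fiber_prod hE hT)
      fun p => ∀ s, isTriangle p.1 s → i ∈ s → s ∈ p.2
  calc (3 / 32 : ℝ) ≤ μ.real {ω | isTriangle (E ω) {i, u, v}} +
        μ.real {ω | ∀ s, isTriangle (E ω) s → i ∈ s → s ∈ T ω} - 1 := by
        rw [measureReal_isTriangle hE hunif hs]; linarith
    _ ≤ _ := add_sub_one_le_measureReal_inter _ hlocmeas
    _ ≤ _ := measureReal_mono hsub

end LocalListing

theorem mutualInfo_lower_bound_local_listing_general
    {Ω : Type*} [MeasurableSpace Ω] (μ : Measure Ω) [IsProbabilityMeasure μ]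
    (n M : ℕ) (hMcard : Fintype.card (EdgeIdx n) = M)
    (i : Fin n)
    (M' : ℝ) (hM' : M' = ((n : ℝ) - 1) * ((n : ℝ) - 2) / 2)
    (E : Ω → (EdgeIdx n → Bool))
    (hEmeas : ∀ g : EdgeIdx n → Bool, MeasurableSet {ω | E ω = g})
    (hEdist : ∀ g : EdgeIdx n → Bool,
      (μ {ω | E ω = g}).toReal = (1 / 2 : ℝ) ^ M)
    (Ti : Ω → Finset (Finset (Fin n)))
    (hTmeas : ∀ R : Finset (Finset (Fin n)), MeasurableSet {ω | Ti ω = R})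
    (hTtri : ∀ᵐ ω ∂μ, ∀ s ∈ Ti ω, isTriangle (E ω) s)
    (hTloc : 1 - 1 / 32 ≤ (μ {ω | ∀ s : Finset (Fin n),
      isTriangle (E ω) s → i ∈ s → s ∈ Ti ω}).toReal) :
    M' / 16 * (1 / 15 - 1 / 32) ≤ mutualInfo μ E Ti := by
  subst hMcard
  have hcount : M' = #{f : EdgeIdx n | i ∉ f.val} := by
    rw [card_filter_notMem_eq_choose, Nat.cast_choose_two, Nat.cast_sub i.pos, hM']
    push_cast
    ring
  have hunif : ∀ g, μ.real {ω | E ω = g} = (1 / 2) ^ Fintype.card (EdgeIdx n) := hEdist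
  calc M' / 16 * (1 / 15 - 1 / 32) ≤ ∑ f : EdgeIdx n with i ∉ f.val, (3 / 32 : ℝ) := by
        have hM'_nonneg : 0 ≤ M' := hcount ▸ Nat.cast_nonneg _
        rw [sum_const, nsmul_eq_mul, ← hcount]
        linarith
    _ ≤ ∑ f : EdgeIdx n with i ∉ f.val, μ.real {ω | f ∈ coveredPairs (Ti ω)} :=
        sum_le_sum fun f hf => three_div_thirtyTwo_le_measureReal_mem_coveredPairs hEmeas hunif
          hTmeas hTloc (mem_filter.1 hf).2
    _ ≤ ∑ f, μ.real {ω | f ∈ coveredPairs (Ti ω)} :=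
        sum_le_sum_of_subset_of_nonneg (filter_subset _ _) fun _ _ _ => measureReal_nonneg
    _ = ∑ R, μ.real {ω | Ti ω = R} * #(coveredPairs R) :=
        sum_measureReal_mem_eq_sum_mul_card hTmeas coveredPairs
    _ ≤ mutualInfo μ E Ti :=
        sum_measureReal_mul_card_le_mutualInfo hEmeas hunif coveredPairs
          (hTtri.mono fun _ h => forall_mem_coveredPairs_of_isTriangle h)

/-- **Key inequality in the proof of Proposition 7 of the paper (local listing).**
Let `V = {0,…,n-1}` with `n ≥ 3`, let `E` be the tuple of independent uniform
`{0,1}`-valued edge indicators of the random graph `G = G(n, 1/2)`, fix a vertex `i`,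
and let `M' = (n-1)(n-2)/2`.  Let `T_i` be a random variable taking values in finite
sets of 3-element subsets of `V` such that almost surely every element of `T_i` is a
triangle of `G`, and such that with probability at least `1 - 1/32` the set `T_i`
contains every triangle of `G` containing `i`.  Then
`I(E; T_i) ≥ (M'/16) (1/15 - 1/32)`; in particular `I(E; T_i) = Ω(n²)`. -/
theorem mutualInfo_lower_bound_local_listing
    {Ω : Type*} [MeasurableSpace Ω] (μ : Measure Ω) [IsProbabilityMeasure μ]
    (n M : ℕ) (hn : 3 ≤ n) (hM : M = n * (n - 1) / 2)
    (hMcard : Fintype.card (EdgeIdx n) = M)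
    (i : Fin n)
    (M' : ℝ) (hM' : M' = ((n : ℝ) - 1) * ((n : ℝ) - 2) / 2)
    (E : Ω → (EdgeIdx n → Bool))
    (hEmeas : ∀ g : EdgeIdx n → Bool, MeasurableSet {ω | E ω = g})
    (hEdist : ∀ g : EdgeIdx n → Bool,
      (μ {ω | E ω = g}).toReal = (1 / 2 : ℝ) ^ M)
    (Ti : Ω → Finset (Finset (Fin n)))
    (hTmeas : ∀ R : Finset (Finset (Fin n)), MeasurableSet {ω | Ti ω = R})
    (hTtri : ∀ᵐ ω ∂μ, ∀ s ∈ Ti ω, isTriangle (E ω) s)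
    (hTloc : 1 - 1 / 32 ≤ (μ {ω | ∀ s : Finset (Fin n),
      isTriangle (E ω) s → i ∈ s → s ∈ Ti ω}).toReal) :
    M' / 16 * (1 / 15 - 1 / 32) ≤ mutualInfo μ E Ti :=
  mutualInfo_lower_bound_local_listing_general μ n M hMcard i M' hM' E hEmeas hEdist Ti hTmeas hTtri
    hTloc
end
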